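/- arXiv:1108.6143 — 10 statements merged into one kernel-verified Lean document; each statement's English description precedes it below -/
import Mathlib

section
/- If a finite simple graph G admits an n-rainbow coloring c, then the set of edges whose two endpoints receive the same color under c forms a perfect matching of G. -/
open SimpleGraph

/-- `c` is an `n`-rainbow coloring of `G`: every color appears exactly once in the
open neighborhood of each vertex. -/
def IsRainbow {V : Type*} {n : ℕ} (G : SimpleGraph V) (c : V → Fin n) : Prop :=
  ∀ v : V, ∀ i : Fin n, ∃! w : V, G.Adj v w ∧ c w = i

/-- Switching `G` at the vertex `v`: reverse the adjacency between `v` and all other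
vertices. -/
def switch {V : Type*} (G : SimpleGraph V) (v : V) : SimpleGraph V :=
  SimpleGraph.fromRel (fun x y => Xor' (G.Adj x y) (x = v ∨ y = v))

/-- The double `G̃` of `G`: vertices `inl i` (= `i`) and `inr i` (= `i'`), with edges
`(i,i')`; `(i,j)` and `(i',j')` for edges `(i,j)` of `G`; and `(i,j')`, `(i',j)` for
non-edges `i ≠ j` of `G`. -/
def double {V : Type*} (G : SimpleGraph V) : SimpleGraph (V ⊕ V) :=
  SimpleGraph.fromRel (fun x y =>
    match x, y with
    | .inl i, .inl j => G.Adj i j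
    | .inr i, .inr j => G.Adj i j
    | .inl i, .inr j => i = j ∨ ¬ G.Adj i j
    | .inr i, .inl j => i = j ∨ ¬ G.Adj i j)

open Classical in
/-- The Seidel matrix of `G`: zero diagonal, `1` for edges, `-1` for non-edges. -/
noncomputable def seidel {V : Type*} (G : SimpleGraph V) : Matrix V V ℝ :=
  fun i j => if i = j then 0 else if G.Adj i j then 1 else -1

/-- A Seidel matrix: symmetric, zero diagonal, off-diagonal entries `±1`. -/
def IsSeidel {m : Type*} (A : Matrix m m ℝ) : Prop :=
  A.IsSymm ∧ (∀ i, A i i = 0) ∧ ∀ i j, i ≠ j → A i j = 1 ∨ A i j = -1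

/-- A permutation matrix. -/
def IsPermMatrix {m : Type*} [DecidableEq m] (P : Matrix m m ℝ) : Prop :=
  ∃ σ : Equiv.Perm m, P = σ.permMatrix ℝ

/-- A line (row or column) with exactly one nonzero entry, equal to `±1`. -/
def SignedPermLine {m : Type*} (r : m → ℝ) : Prop :=
  ∃ j, (r j = 1 ∨ r j = -1) ∧ ∀ k, k ≠ j → r k = 0

/-- A line with either exactly one nonzero entry `±1`, or exactly two nonzero entries,
each `±1/2`. -/
def HalfLine {m : Type*} (r : m → ℝ) : Prop :=
  SignedPermLine r ∨
    ∃ j k, j ≠ k ∧ (r j = 1/2 ∨ r j = -1/2) ∧ (r k = 1/2 ∨ r k = -1/2) ∧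
      ∀ l, l ≠ j → l ≠ k → r l = 0

/-- A signed permutation matrix: exactly one nonzero entry, `±1`, in every row and column. -/
def IsSignedPermMatrix {m : Type*} (Q : Matrix m m ℝ) : Prop :=
  (∀ i, SignedPermLine (Q i)) ∧ (∀ j, SignedPermLine (fun i => Q i j))

/-- A signed half-permutation matrix. -/
def IsSignedHalfPermMatrix {m : Type*} (S : Matrix m m ℝ) : Prop :=
  (∀ i, HalfLine (S i)) ∧ (∀ j, HalfLine (fun i => S i j))

/-- `T` is an integration of the signed half-permutation matrix `S`. -/
def IsIntegration {m : Type*} (T S : Matrix m m ℝ) : Prop :=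
  IsSignedPermMatrix T ∧
    ∀ i j, ((S i j = 1 ∨ S i j = -1) → T i j = S i j) ∧
      ((S i j = 1/2 ∨ S i j = -1/2) → T i j = 2 * S i j ∨ T i j = 0) ∧
      (S i j = 0 → T i j = 0)

/-- Labeled switching equivalence: a sequence of switchings transforms `G` into `G'`. -/
def SwitchEquiv {V : Type*} (G G' : SimpleGraph V) : Prop :=
  Relation.ReflTransGen (fun H H' => ∃ v, H' = switch H v) G G'

/-- Switching equivalence allowing relabeling. -/
def SwitchEquivIso {V : Type*} (G G' : SimpleGraph V) : Prop :=
  ∃ H, SwitchEquiv G H ∧ Nonempty (H ≃g G')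

/-- The subgraph of `G` consisting of all edges whose endpoints get the same color. -/
def sameColorSubgraph {V : Type*} {n : ℕ} (G : SimpleGraph V) (c : V → Fin n) :
    G.Subgraph where
  verts := Set.univ
  Adj a b := G.Adj a b ∧ c a = c b
  adj_sub h := h.1
  edge_vert _ := Set.mem_univ _
  symm := ⟨fun a b h => ⟨h.1.symm, h.2.symm⟩⟩

/-- The `2n × 2n` block matrix `M̃ = [[M, I−M],[I−M, M]]`. -/
def tildeMat {n : ℕ} (M : Matrix (Fin n) (Fin n) ℝ) :
    Matrix (Fin n ⊕ Fin n) (Fin n ⊕ Fin n) ℝ :=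
  Matrix.fromBlocks M (1 - M) (1 - M) M

theorem rainbow_sameColor_perfectMatching_general {V : Type*} {n : ℕ}
    (G : SimpleGraph V) (c : V → Fin n) (h : IsRainbow G c) :
    (sameColorSubgraph G c).IsPerfectMatching := by
  rw [Subgraph.isPerfectMatching_iff]
  intro v
  simpa only [sameColorSubgraph, eq_comm (a := c v)] using h v (c v)

/-- the same-colored edges form a perfect matching. -/
theorem rainbow_sameColor_perfectMatching {V : Type*} [Fintype V] {n : ℕ}
    (G : SimpleGraph V) (c : V → Fin n) (h : IsRainbow G c) :
    (sameColorSubgraph G c).IsPerfectMatching :=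
  rainbow_sameColor_perfectMatching_general G c h
end

section
/- If a finite connected simple graph G admits an n-rainbow coloring, then each color class has the same cardinality; in particular, the number of vertices of a connected n-rainbow graph is a multiple of n. -/
open SimpleGraph

open Finset

theorem Fintype.card_dvd_card_of_card_fiber_eq {α β : Type*} [Fintype α] [Fintype β]
    [DecidableEq β] {f : α → β} (hf : ∀ b b', #{a | f a = b} = #{a | f a = b'}) :
    Fintype.card β ∣ Fintype.card α := by
  cases isEmpty_or_nonempty β with
  | inl _ =>
    have : IsEmpty α := f.isEmpty
    simp
  | inr hβ =>
    obtain ⟨b₀⟩ := hβ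
    refine ⟨#{a | f a = b₀}, ?_⟩
    rw [← card_univ, card_eq_sum_card_fiberwise (t := univ) (fun a _ => mem_univ (f a)),
      sum_const_nat fun b _ => hf b b₀, card_univ]

section Rainbow

variable {V : Type*} [Fintype V] {n : ℕ} {G : SimpleGraph V} {c : V → Fin n}

theorem IsRainbow.card_filter_adj [DecidableRel G.Adj] (h : IsRainbow G c) (v : V) (i : Fin n) :
    #{w | c w = i ∧ G.Adj v w} = 1 := by
  obtain ⟨w, hw, huniq⟩ := h v i
  refine card_eq_one.2 ⟨w, ext fun x => ?_⟩
  simp only [mem_filter, mem_univ, true_and, mem_singleton]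
  exact ⟨fun hx => huniq x ⟨hx.2, hx.1⟩, fun hx => hx ▸ ⟨hw.2, hw.1⟩⟩

/-- Double counting the edges between the classes of `i` and `j`: each vertex of either class
has exactly one neighbour in the other. -/
theorem IsRainbow.card_colorClass_eq (h : IsRainbow G c) (i j : Fin n) :
    #{v | c v = i} = #{v | c v = j} := by
  classical
  simpa only [mul_one] using card_mul_eq_card_mul G.Adj (m := 1) (n := 1)
    (fun v _ => by rw [bipartiteAbove, filter_filter]; exact h.card_filter_adj v j)
    (fun w _ => by
      simpa only [bipartiteBelow, filter_filter, G.adj_comm] using h.card_filter_adj w i)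

end Rainbow

theorem rainbow_color_classes_equal_general {V : Type*} [Fintype V] {n : ℕ}
    (G : SimpleGraph V) (c : V → Fin n) (h : IsRainbow G c) :
    (∀ i j : Fin n,
        (Finset.univ.filter fun v => c v = i).card
          = (Finset.univ.filter fun v => c v = j).card) ∧
      n ∣ Fintype.card V := by
  refine ⟨h.card_colorClass_eq, ?_⟩
  simpa only [Fintype.card_fin] using Fintype.card_dvd_card_of_card_fiber_eq h.card_colorClass_eq

/-- for a connected rainbow graph all color classes have the same size,
and in particular `n` divides the number of vertices. -/
theorem rainbow_color_classes_equal {V : Type*} [Fintype V] [DecidableEq V] {n : ℕ}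
    (G : SimpleGraph V) (c : V → Fin n) (hconn : G.Connected) (h : IsRainbow G c) :
    (∀ i j : Fin n,
        (Finset.univ.filter fun v => c v = i).card
          = (Finset.univ.filter fun v => c v = j).card) ∧
      n ∣ Fintype.card V :=
  rainbow_color_classes_equal_general G c h
end

section
/- If a finite connected simple graph G admits an n-rainbow coloring, then the number of vertices of G is a multiple of 2n. -/
open SimpleGraph

/-!
The same-colored edges form a perfect matching inside each color class, so every color class
has even size. Counting the edges between two color classes `i` and `j`, each vertex of either
class has exactly one neighbour in the other, so all `n` color classes have the same size.
-/

open Finset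

namespace IsRainbow

variable {V : Type*} {n : ℕ} {G : SimpleGraph V} {c : V → Fin n}

theorem card_filter_adj_color_eq_one [Fintype V] [DecidableRel G.Adj] (h : IsRainbow G c)
    (v : V) (i : Fin n) :
    #{w | G.Adj v w ∧ c w = i} = 1 := by
  obtain ⟨w, hw, huniq⟩ := h v i
  exact card_eq_one.2 ⟨w, by ext u; simpa using ⟨huniq u, fun hu => hu ▸ hw⟩⟩

theorem card_color_eq [Fintype V] (h : IsRainbow G c) (i j : Fin n) :
    #{v | c v = i} = #{v | c v = j} := by
  classical
  have hij := card_mul_eq_card_mul G.Adj (m := 1) (n := 1)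
    (s := {v | c v = i}) (t := {v | c v = j})
    (fun v _ => by
      simpa [bipartiteAbove, filter_filter, and_comm] using h.card_filter_adj_color_eq_one v j)
    (fun w _ => by
      simpa [bipartiteBelow, filter_filter, and_comm, G.adj_comm]
        using h.card_filter_adj_color_eq_one w i)
  simpa using hij

theorem isMatching_induce_color (h : IsRainbow G c) (i : Fin n) :
    ((sameColorSubgraph G c).induce {v | c v = i}).IsMatching := by
  intro v hv
  obtain ⟨w, hw, huniq⟩ := h v i
  refine ⟨w, ⟨hv, hw.2, hw.1, hv.trans hw.2.symm⟩, ?_⟩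
  rintro u ⟨-, hu, hadj, -⟩
  exact huniq u ⟨hadj, hu⟩

theorem even_card_color [Fintype V] (h : IsRainbow G c) (i : Fin n) : Even #{v | c v = i} := by
  classical
  simpa using (h.isMatching_induce_color i).even_card

end IsRainbow

theorem rainbow_card_dvd_general {V : Type*} [Fintype V] {n : ℕ} (G : SimpleGraph V)
    (c : V → Fin n) (h : IsRainbow G c) :
    2 * n ∣ Fintype.card V := by
  classical
  rcases isEmpty_or_nonempty V with _ | ⟨⟨v₀⟩⟩
  · simp
  obtain ⟨k, hk⟩ := h.even_card_color (c v₀)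
  have hcard : Fintype.card V = n * #{v | c v = c v₀} := by
    rw [← card_univ, card_eq_sum_card_fiberwise (fun v _ => mem_univ (c v)),
      sum_congr rfl fun i _ => h.card_color_eq i (c v₀), sum_const, card_univ, Fintype.card_fin,
      smul_eq_mul]
  exact ⟨k, by rw [hcard, hk]; ring⟩

/-- the number of vertices of a connected `n`-rainbow graph is a multiple
of `2n`. -/
theorem rainbow_card_dvd {V : Type*} [Fintype V] {n : ℕ} (G : SimpleGraph V)
    (c : V → Fin n) (hconn : G.Connected) (h : IsRainbow G c) :
    2 * n ∣ Fintype.card V :=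
  rainbow_card_dvd_general G c h
end

section
/- For any simple graph G on vertex set {1,...,n}, the graph G̃ on vertex set {1,...,n} ⊔ {1',...,n'}, with edges (i,i') for all i, edges (i,j) and (i',j') whenever (i,j) ∈ E(G), and edges (i,j') and (i',j) whenever i ≠ j and (i,j) ∉ E(G), admits an n-rainbow coloring. -/
open SimpleGraph

section Double

variable {V : Type*} (G : SimpleGraph V)

@[simp]
theorem double_adj_inl_inl (i j : V) : (double G).Adj (.inl i) (.inl j) ↔ G.Adj i j := by
  simp only [double, fromRel_adj, ne_eq, Sum.inl.injEq]
  exact ⟨fun ⟨_, h⟩ => h.elim id (·.symm), fun h => ⟨h.ne, .inl h⟩⟩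

@[simp]
theorem double_adj_inr_inr (i j : V) : (double G).Adj (.inr i) (.inr j) ↔ G.Adj i j := by
  simp only [double, fromRel_adj, ne_eq, Sum.inr.injEq]
  exact ⟨fun ⟨_, h⟩ => h.elim id (·.symm), fun h => ⟨h.ne, .inl h⟩⟩

@[simp]
theorem double_adj_inl_inr (i j : V) :
    (double G).Adj (.inl i) (.inr j) ↔ i = j ∨ ¬G.Adj i j := by
  simp only [double, fromRel_adj, ne_eq, reduceCtorEq, not_false_eq_true, true_and]
  rw [eq_comm (a := j), G.adj_comm j, or_self]

@[simp]
theorem double_adj_inr_inl (i j : V) :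
    (double G).Adj (.inr i) (.inl j) ↔ i = j ∨ ¬G.Adj i j := by
  rw [adj_comm, double_adj_inl_inr, eq_comm, G.adj_comm]

theorem double_adj_inr_iff_not_adj_inl (v : V ⊕ V) (j : V) :
    (double G).Adj v (.inr j) ↔ ¬(double G).Adj v (.inl j) := by
  rcases v with i | i
  · simp only [double_adj_inl_inr, double_adj_inl_inl, or_iff_right_iff_imp]
    rintro rfl
    exact G.irrefl
  · simp only [double_adj_inr_inr, double_adj_inr_inl, not_or, not_not]
    exact ⟨fun h => ⟨h.ne, h⟩, And.right⟩

theorem double_existsUnique_adj (v : V ⊕ V) (j : V) :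
    ∃! w, (double G).Adj v w ∧ Sum.elim id id w = j := by
  have hxor := double_adj_inr_iff_not_adj_inl G v j
  by_cases h : (double G).Adj v (.inl j)
  · refine ⟨.inl j, ⟨h, rfl⟩, ?_⟩
    rintro (w | w) ⟨hadj, rfl⟩
    · rfl
    · exact absurd h (hxor.mp hadj)
  · refine ⟨.inr j, ⟨hxor.mpr h, rfl⟩, ?_⟩
    rintro (w | w) ⟨hadj, rfl⟩
    · exact absurd hadj h
    · rfl

end Double

/-- the double of any graph on `n` vertices admits an `n`-rainbow
coloring. -/
theorem double_isRainbow {n : ℕ} (G : SimpleGraph (Fin n)) :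
    ∃ c : (Fin n ⊕ Fin n) → Fin n, IsRainbow (double G) c :=
  ⟨Sum.elim id id, double_existsUnique_adj G⟩
end

section
/- Let G be a simple graph on {1,...,n} and for a vertex v, let G_v denote the graph obtained by switching at v (reversing adjacency between v and every other vertex). Then the doubled graph G̃ is isomorphic to the doubled graph (G_v)~; explicitly, the map interchanging the labels v and v' and fixing all other vertices is a graph isomorphism from (G_v)~ to G̃. -/
open SimpleGraph

namespace Equiv

variable {V : Type*} [DecidableEq V]

theorem swap_inl_inr_apply_inl (v i : V) :
    swap (Sum.inl v) (Sum.inr v) (Sum.inl i) = if i = v then Sum.inr i else Sum.inl i := by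
  split_ifs with h
  · rw [h, swap_apply_left]
  · exact swap_apply_of_ne_of_ne (by simpa using h) Sum.inl_ne_inr

theorem swap_inl_inr_apply_inr (v i : V) :
    swap (Sum.inl v) (Sum.inr v) (Sum.inr i) = if i = v then Sum.inl i else Sum.inr i := by
  split_ifs with h
  · rw [h, swap_apply_right]
  · exact swap_apply_of_ne_of_ne Sum.inr_ne_inl (by simpa using h)

end Equiv

namespace SimpleGraph

variable {V : Type*} (G : SimpleGraph V)

@[simp]
theorem double_adj_inl_inl {i j : V} : (double G).Adj (Sum.inl i) (Sum.inl j) ↔ G.Adj i j := by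
  simp only [double, fromRel_adj, ne_eq, Sum.inl.injEq]
  exact ⟨fun h => h.2.elim id (G.adj_symm ·), fun h => ⟨h.ne, .inl h⟩⟩

@[simp]
theorem double_adj_inr_inr {i j : V} : (double G).Adj (Sum.inr i) (Sum.inr j) ↔ G.Adj i j := by
  simp only [double, fromRel_adj, ne_eq, Sum.inr.injEq]
  exact ⟨fun h => h.2.elim id (G.adj_symm ·), fun h => ⟨h.ne, .inl h⟩⟩

@[simp]
theorem double_adj_inl_inr {i j : V} :
    (double G).Adj (Sum.inl i) (Sum.inr j) ↔ i = j ∨ ¬G.Adj i j := by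
  simp only [double, fromRel_adj, ne_eq, reduceCtorEq, not_false_eq_true, true_and]
  refine ⟨fun h => h.elim id fun h' => ?_, .inl⟩
  rcases h' with rfl | h'
  · exact .inl rfl
  · exact .inr fun hij => h' hij.symm

@[simp]
theorem double_adj_inr_inl {i j : V} :
    (double G).Adj (Sum.inr i) (Sum.inl j) ↔ i = j ∨ ¬G.Adj i j := by
  rw [adj_comm, double_adj_inl_inr, eq_comm, G.adj_comm]

theorem switch_adj {v x y : V} :
    (switch G v).Adj x y ↔ x ≠ y ∧ (G.Adj x y ↔ ¬(x = v ∨ y = v)) := by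
  simp only [switch, fromRel_adj]
  change x ≠ y ∧ (Xor _ _ ∨ Xor _ _) ↔ _
  rw [G.adj_comm y x, or_comm (a := y = v), or_self, xor_iff_iff_not]

@[simp]
theorem switch_adj_of_ne {v x y : V} (hx : x ≠ v) (hy : y ≠ v) :
    (switch G v).Adj x y ↔ G.Adj x y := by
  simp only [switch_adj, hx, hy, or_self, not_false_eq_true, iff_true, and_iff_right_iff_imp]
  exact Adj.ne

@[simp]
theorem switch_adj_left {v y : V} : (switch G v).Adj v y ↔ y ≠ v ∧ ¬G.Adj v y := by
  simp only [switch_adj, true_or, not_true_eq_false, iff_false, ne_comm]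

@[simp]
theorem switch_adj_right {v x : V} : (switch G v).Adj x v ↔ x ≠ v ∧ ¬G.Adj x v := by
  rw [adj_comm, switch_adj_left, G.adj_comm]

variable [DecidableEq V]

/-- Away from the pair `v, v'`, the edges of `double G` at `v'` are those at `v` complemented,
which is exactly what switching at `v` does to the edges at `v`. -/
def doubleSwitchIso (v : V) : double (switch G v) ≃g double G where
  toEquiv := Equiv.swap (Sum.inl v) (Sum.inr v)
  map_rel_iff' {x y} := by
    rcases x with i | i <;> rcases y with j | j <;>
      simp only [Equiv.swap_inl_inr_apply_inl, Equiv.swap_inl_inr_apply_inr] <;>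
      split_ifs <;> subst_vars <;> simp_all [eq_comm]

end SimpleGraph

/-- swapping the labels `v` and `v'` gives an isomorphism from the double
of the switch of `G` at `v` to the double of `G`. -/
theorem double_switch_iso {n : ℕ} (G : SimpleGraph (Fin n)) (v : Fin n) :
    ∃ φ : double (switch G v) ≃g double G,
      (∀ i : Fin n, φ (Sum.inl i) = if i = v then Sum.inr i else Sum.inl i) ∧
      (∀ i : Fin n, φ (Sum.inr i) = if i = v then Sum.inl i else Sum.inr i) :=
  ⟨doubleSwitchIso G v, Equiv.swap_inl_inr_apply_inl v, Equiv.swap_inl_inr_apply_inr v⟩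
end

section
/- Let A and B be n×n Seidel matrices with Ã = P B̃ P⁻¹ for a 2n×2n permutation matrix P = [[P₁,P₂],[P₃,P₄]] (in n×n blocks), where M̃ := [[M, I−M],[I−M, M]]. Then with Z := (P₁ − P₂ − P₃ + P₄)/2, one has A − I = Z (B − I) Zᵀ. -/
open SimpleGraph Matrix

/-!
Write `U = [1; -1]` and `V = [1; 1]` for the two `2n × n` stacks of identity matrices. For
`M̃ = [[M, 1 - M], [1 - M, M]]` one has `Uᵀ M̃ = (2M - 1) Uᵀ`, `M̃ U = U (2M - 1)` and `M̃ V = V`.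
Hence, from `Ã P = P B̃`, the matrices `Z = ½ Uᵀ P U = (P₁ - P₂ - P₃ + P₄)/2` and `Y = ½ Uᵀ P V`
satisfy `A Z = Z B` and `A Y = Y`, while `U Uᵀ + V Vᵀ = 2` and `P Pᵀ = 1` give `Z Zᵀ + Y Yᵀ = 1`.
Since `(A - 1) Y = 0`, this yields `Z (B - 1) Zᵀ = (A - 1) Z Zᵀ = (A - 1) (Z Zᵀ + Y Yᵀ) = A - 1`.
-/

theorem mul_eq_mul_of_two_mul_sub_one_mul_eq {K R : Type*} [Field K] [NeZero (2 : K)] [Ring R]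
    [Algebra K R] {a b w : R} (h : (2 * a - 1) * w = w * (2 * b - 1)) : a * w = w * b := by
  have h2 : (2 : K) • (a * w) = (2 : K) • (w * b) := by
    rw [two_smul, two_smul]
    linear_combination (norm := noncomm_ring) h
  exact smul_right_injective R two_ne_zero h2

theorem mul_sub_one_mul_eq_sub_one_mul_add {R : Type*} [Ring R] {a b w x w' x' : R}
    (hw : a * w = w * b) (hx : a * x = x) :
    w * (b - 1) * w' = (a - 1) * (w * w' + x * x') := by
  have hx' : (a - 1) * x = 0 := by rw [sub_mul, hx, one_mul, sub_self]
  rw [mul_add, ← mul_assoc _ x, hx', zero_mul, add_zero, mul_sub, ← hw, mul_one, ← sub_one_mul,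
    mul_assoc]

section Stacks

variable (m R : Type*) [Fintype m] [DecidableEq m] [Ring R]

def diffStack : Matrix (m ⊕ m) m R := fromRows 1 (-1)

def sumStack : Matrix (m ⊕ m) m R := fromRows 1 1

variable {m R}

theorem fromBlocks_mul_diffStack (M : Matrix m m R) :
    fromBlocks M (1 - M) (1 - M) M * diffStack m R = diffStack m R * (2 * M - 1) := by
  simp only [diffStack, fromBlocks_mul_fromRows, fromRows_mul]
  congr 1 <;> noncomm_ring

theorem diffStack_transpose_mul_fromBlocks (M : Matrix m m R) :
    (diffStack m R)ᵀ * fromBlocks M (1 - M) (1 - M) M = (2 * M - 1) * (diffStack m R)ᵀ := by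
  simp only [diffStack, transpose_fromRows, transpose_one, transpose_neg, fromCols_mul_fromBlocks,
    mul_fromCols]
  congr 1 <;> noncomm_ring

theorem fromBlocks_mul_sumStack (M : Matrix m m R) :
    fromBlocks M (1 - M) (1 - M) M * sumStack m R = sumStack m R := by
  simp only [sumStack, fromBlocks_mul_fromRows]
  congr 1 <;> noncomm_ring

theorem diffStack_transpose_mul_diffStack : (diffStack m R)ᵀ * diffStack m R = 2 := by
  simp only [diffStack, transpose_fromRows, transpose_one, transpose_neg, fromCols_mul_fromRows]
  rw [mul_one, neg_mul_neg, mul_one, one_add_one_eq_two]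

theorem diffStack_mul_transpose_add_sumStack_mul_transpose :
    diffStack m R * (diffStack m R)ᵀ + sumStack m R * (sumStack m R)ᵀ = 2 := by
  simp only [diffStack, sumStack, transpose_fromRows, transpose_one, transpose_neg,
    fromRows_mul_fromCols]
  rw [fromBlocks_add, ← one_add_one_eq_two, ← fromBlocks_one, fromBlocks_add]
  congr 1 <;> noncomm_ring

theorem diffStack_transpose_mul_mul_diffStack (P : Matrix (m ⊕ m) (m ⊕ m) R) :
    (diffStack m R)ᵀ * P * diffStack m R =
      P.toBlocks₁₁ - P.toBlocks₁₂ - P.toBlocks₂₁ + P.toBlocks₂₂ := by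
  conv_lhs => rw [← fromBlocks_toBlocks P]
  simp only [diffStack, transpose_fromRows, transpose_one, transpose_neg, fromCols_mul_fromBlocks,
    fromCols_mul_fromRows]
  noncomm_ring

theorem two_mul_sub_one_mul_diffStack_transpose_mul {A B : Matrix m m R}
    {P : Matrix (m ⊕ m) (m ⊕ m) R}
    (h : fromBlocks A (1 - A) (1 - A) A * P = P * fromBlocks B (1 - B) (1 - B) B)
    (S : Matrix (m ⊕ m) m R) :
    (2 * A - 1) * ((diffStack m R)ᵀ * P * S) =
      (diffStack m R)ᵀ * P * (fromBlocks B (1 - B) (1 - B) B * S) := by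
  simp only [← Matrix.mul_assoc, ← diffStack_transpose_mul_fromBlocks]
  rw [Matrix.mul_assoc _ _ P, h, ← Matrix.mul_assoc]

end Stacks

section Intertwining

variable {K m : Type*} [Field K] [NeZero (2 : K)] [Fintype m] [DecidableEq m]
  {A B : Matrix m m K} {P : Matrix (m ⊕ m) (m ⊕ m) K}

theorem mul_diffStack_conj_eq
    (h : fromBlocks A (1 - A) (1 - A) A * P = P * fromBlocks B (1 - B) (1 - B) B) :
    A * ((diffStack m K)ᵀ * P * diffStack m K) = (diffStack m K)ᵀ * P * diffStack m K * B := by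
  refine mul_eq_mul_of_two_mul_sub_one_mul_eq (K := K) ?_
  rw [two_mul_sub_one_mul_diffStack_transpose_mul h, fromBlocks_mul_diffStack]
  simp only [Matrix.mul_assoc]

theorem mul_diffStack_sumStack_conj_eq
    (h : fromBlocks A (1 - A) (1 - A) A * P = P * fromBlocks B (1 - B) (1 - B) B) :
    A * ((diffStack m K)ᵀ * P * sumStack m K) = (diffStack m K)ᵀ * P * sumStack m K := by
  have h2 : (2 * A - 1) * ((diffStack m K)ᵀ * P * sumStack m K) =
      (diffStack m K)ᵀ * P * sumStack m K * (2 * 1 - 1) := by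
    rw [two_mul_sub_one_mul_diffStack_transpose_mul h, fromBlocks_mul_sumStack]
    noncomm_ring
  simpa using mul_eq_mul_of_two_mul_sub_one_mul_eq (K := K) h2

end Intertwining

theorem diffStack_conj_mul_transpose_add {m R : Type*} [Fintype m] [DecidableEq m] [CommRing R]
    {P : Matrix (m ⊕ m) (m ⊕ m) R} (hP : P * Pᵀ = 1) :
    (diffStack m R)ᵀ * P * diffStack m R * ((diffStack m R)ᵀ * P * diffStack m R)ᵀ +
      (diffStack m R)ᵀ * P * sumStack m R * ((diffStack m R)ᵀ * P * sumStack m R)ᵀ = 4 := by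
  calc _ = (diffStack m R)ᵀ * P *
        (diffStack m R * (diffStack m R)ᵀ + sumStack m R * (sumStack m R)ᵀ) * Pᵀ *
          diffStack m R := by
        simp only [transpose_mul, transpose_transpose, Matrix.mul_add, Matrix.add_mul,
          Matrix.mul_assoc]
    _ = 4 := by
        rw [diffStack_mul_transpose_add_sumStack_mul_transpose, ← one_add_one_eq_two]
        simp only [Matrix.mul_add, Matrix.add_mul, Matrix.mul_one, Matrix.mul_assoc, hP,
          diffStack_transpose_mul_diffStack]
        norm_num

theorem sub_one_eq_conj_of_fromBlocks_mul_eq {K m : Type*} [Field K] [NeZero (2 : K)] [Fintype m]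
    [DecidableEq m] {A B : Matrix m m K} {P : Matrix (m ⊕ m) (m ⊕ m) K} (hP : P * Pᵀ = 1)
    (h : fromBlocks A (1 - A) (1 - A) A * P = P * fromBlocks B (1 - B) (1 - B) B) :
    A - 1 =
      ((1/2 : K) • (P.toBlocks₁₁ - P.toBlocks₁₂ - P.toBlocks₂₁ + P.toBlocks₂₂)) * (B - 1) *
        ((1/2 : K) • (P.toBlocks₁₁ - P.toBlocks₁₂ - P.toBlocks₂₁ + P.toBlocks₂₂))ᵀ := by
  rw [← diffStack_transpose_mul_mul_diffStack]
  set Z := (1/2 : K) • ((diffStack m K)ᵀ * P * diffStack m K)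
  set Y := (1/2 : K) • ((diffStack m K)ᵀ * P * sumStack m K)
  have hZ : A * Z = Z * B := by rw [mul_smul_comm, smul_mul_assoc, mul_diffStack_conj_eq h]
  have hY : A * Y = Y := by rw [mul_smul_comm, mul_diffStack_sumStack_conj_eq h]
  have hZY : Z * Zᵀ + Y * Yᵀ = 1 := by
    simp only [Z, Y, transpose_smul, smul_mul_smul, ← smul_add,
      diffStack_conj_mul_transpose_add hP]
    rw [Algebra.smul_def, ← map_ofNat (algebraMap K _) 4, ← map_mul,
      ← map_one (algebraMap K (Matrix m m K))]
    congr 1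
    field_simp
    norm_num
  rw [mul_sub_one_mul_eq_sub_one_mul_add hZ hY, hZY, mul_one]

theorem tilde_conj_Z_general {n : ℕ} (A B : Matrix (Fin n) (Fin n) ℝ)
    (P : Matrix (Fin n ⊕ Fin n) (Fin n ⊕ Fin n) ℝ) (hP : IsPermMatrix P)
    (h : tildeMat A = P * tildeMat B * P⁻¹) :
    A - 1 =
      ((1/2 : ℝ) • (P.toBlocks₁₁ - P.toBlocks₁₂ - P.toBlocks₂₁ + P.toBlocks₂₂)) *
        (B - 1) *
      (((1/2 : ℝ) • (P.toBlocks₁₁ - P.toBlocks₁₂ - P.toBlocks₂₁ + P.toBlocks₂₂)))ᵀ := by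
  obtain ⟨σ, rfl⟩ := hP
  have hPPt : σ.permMatrix ℝ * (σ.permMatrix ℝ)ᵀ = 1 := by
    rw [transpose_permMatrix, ← permMatrix_mul, inv_mul_cancel, permMatrix_one]
  refine sub_one_eq_conj_of_fromBlocks_mul_eq hPPt ?_
  rw [← tildeMat, ← tildeMat, h, inv_eq_left_inv (mul_eq_one_comm.mp hPPt), Matrix.mul_assoc,
    mul_eq_one_comm.mp hPPt, mul_one]

/-- if `Ã = P B̃ P⁻¹`, then `A − I = Z (B − I) Zᵀ` where
`Z = (P₁ − P₂ − P₃ + P₄)/2`. -/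
theorem tilde_conj_Z {n : ℕ} (A B : Matrix (Fin n) (Fin n) ℝ)
    (hA : IsSeidel A) (hB : IsSeidel B)
    (P : Matrix (Fin n ⊕ Fin n) (Fin n ⊕ Fin n) ℝ) (hP : IsPermMatrix P)
    (h : tildeMat A = P * tildeMat B * P⁻¹) :
    A - 1 =
      ((1/2 : ℝ) • (P.toBlocks₁₁ - P.toBlocks₁₂ - P.toBlocks₂₁ + P.toBlocks₂₂)) *
        (B - 1) *
      (((1/2 : ℝ) • (P.toBlocks₁₁ - P.toBlocks₁₂ - P.toBlocks₂₁ + P.toBlocks₂₂)))ᵀ :=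
  tilde_conj_Z_general A B P hP h
end

section
/- If P = [[P₁,P₂],[P₃,P₄]] is a 2n×2n permutation matrix in n×n blocks, then Z := (P₁ − P₂ − P₃ + P₄)/2 is a signed half-permutation matrix. -/
open SimpleGraph

/-!
Row `i` of `Z` is `½ (foldSigned (P (inl i)) - foldSigned (P (inr i)))`, where `foldSigned` folds a
vector on `m ⊕ m` onto `m` with signs `+` on the left copy and `-` on the right one. A row of a
permutation matrix is a unit vector `e_a`, and `foldSigned e_a = ±e_p` with `p` the index underlying
`a`. The two rows of `P` involved are distinct, so the two signed unit vectors either sit at different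
positions, giving two entries `±½`, or at the same position with opposite signs, giving a single
entry `±1`. Columns of `Z` arise in the same way from rows of `Pᵀ`, again a permutation matrix.
-/

open Matrix

section Fold

variable {m : Type*}

def foldSigned (v : m ⊕ m → ℝ) : m → ℝ :=
  fun j => v (.inl j) - v (.inr j)

lemma half_smul_signed_toBlocks_row (P : Matrix (m ⊕ m) (m ⊕ m) ℝ) (i : m) :
    ((1/2 : ℝ) • (P.toBlocks₁₁ - P.toBlocks₁₂ - P.toBlocks₂₁ + P.toBlocks₂₂)) i =
      (1/2 : ℝ) • (foldSigned (P (.inl i)) - foldSigned (P (.inr i))) := by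
  ext j
  simp [foldSigned, toBlocks₁₁, toBlocks₁₂, toBlocks₂₁, toBlocks₂₂]
  ring

lemma half_smul_signed_toBlocks_col (P : Matrix (m ⊕ m) (m ⊕ m) ℝ) (j : m) :
    (fun i => ((1/2 : ℝ) • (P.toBlocks₁₁ - P.toBlocks₁₂ - P.toBlocks₂₁ + P.toBlocks₂₂)) i j) =
      (1/2 : ℝ) • (foldSigned (Pᵀ (.inl j)) - foldSigned (Pᵀ (.inr j))) := by
  ext i
  simp [foldSigned, toBlocks₁₁, toBlocks₁₂, toBlocks₂₁, toBlocks₂₂]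
  ring

variable [DecidableEq m]

lemma foldSigned_single_one (a : m ⊕ m) :
    foldSigned (Pi.single a 1) = Pi.single (a.elim id id) (a.elim (fun _ => 1) fun _ => -1) := by
  ext j
  rcases a with p | p <;> by_cases hj : j = p <;> simp [foldSigned, hj]

end Fold

section Lines

variable {m : Type*} [DecidableEq m]

lemma signedPermLine_single {p : m} {x : ℝ} (hx : x = 1 ∨ x = -1) :
    SignedPermLine (Pi.single p x) :=
  ⟨p, by simpa using hx, fun _ hk => Pi.single_eq_of_ne hk _⟩

lemma halfLine_single_add_single {p q : m} (hpq : p ≠ q) {x y : ℝ}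
    (hx : x = 1/2 ∨ x = -1/2) (hy : y = 1/2 ∨ y = -1/2) :
    HalfLine (Pi.single p x + Pi.single q y) :=
  Or.inr ⟨p, q, hpq, by simpa [hpq] using hx, by simpa [hpq.symm] using hy,
    fun l hlp hlq => by simp [hlp, hlq]⟩

lemma halfLine_half_smul_single_sub_single {p q : m} {s t : ℝ}
    (hs : s = 1 ∨ s = -1) (ht : t = 1 ∨ t = -1) (hst : p = q → s ≠ t) :
    HalfLine ((1/2 : ℝ) • (Pi.single p s - Pi.single q t)) := by
  by_cases hpq : p = q
  · subst hpq
    have hst := hst rfl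
    left
    rw [← Pi.single_sub, ← Pi.single_smul]
    apply signedPermLine_single
    rcases hs with rfl | rfl <;> rcases ht with rfl | rfl <;> norm_num at hst <;> norm_num
  · rw [smul_sub, ← Pi.single_smul, ← Pi.single_smul, sub_eq_add_neg, ← Pi.single_neg]
    apply halfLine_single_add_single hpq
    · rcases hs with rfl | rfl <;> norm_num
    · rcases ht with rfl | rfl <;> norm_num

lemma halfLine_half_smul_foldSigned_single_sub {a b : m ⊕ m} (hab : a ≠ b) :
    HalfLine ((1/2 : ℝ) • (foldSigned (Pi.single a 1) - foldSigned (Pi.single b 1))) := by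
  rw [foldSigned_single_one, foldSigned_single_one]
  apply halfLine_half_smul_single_sub_single <;>
    rcases a with p | p <;> rcases b with q | q <;> simp_all <;> norm_num

end Lines

lemma Equiv.Perm.permMatrix_apply_eq_single {m R : Type*} [DecidableEq m] [Zero R] [One R]
    (σ : Equiv.Perm m) (x : m) : σ.permMatrix R x = Pi.single (σ x) 1 :=
  PEquiv.toMatrix_toPEquiv_apply σ x

lemma Equiv.Perm.transpose_permMatrix_apply_eq_single {m R : Type*} [DecidableEq m] [Zero R]
    [One R] (σ : Equiv.Perm m) (y : m) : (σ.permMatrix R)ᵀ y = Pi.single (σ.symm y) 1 :=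
  PEquiv.transpose_toMatrix_toPEquiv_apply σ y

/-- `Z = (P₁ − P₂ − P₃ + P₄)/2` is a signed half-permutation matrix. -/
theorem Z_isSignedHalfPerm {n : ℕ}
    (P : Matrix (Fin n ⊕ Fin n) (Fin n ⊕ Fin n) ℝ) (hP : IsPermMatrix P) :
    IsSignedHalfPermMatrix
      ((1/2 : ℝ) • (P.toBlocks₁₁ - P.toBlocks₁₂ - P.toBlocks₂₁ + P.toBlocks₂₂)) := by
  obtain ⟨σ, rfl⟩ := hP
  refine ⟨fun i => ?_, fun j => ?_⟩
  · rw [half_smul_signed_toBlocks_row, σ.permMatrix_apply_eq_single,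
      σ.permMatrix_apply_eq_single]
    exact halfLine_half_smul_foldSigned_single_sub (σ.injective.ne Sum.inl_ne_inr)
  · rw [half_smul_signed_toBlocks_col, σ.transpose_permMatrix_apply_eq_single,
      σ.transpose_permMatrix_apply_eq_single]
    exact halfLine_half_smul_foldSigned_single_sub (σ.symm.injective.ne Sum.inl_ne_inr)
end

section
/- Let M, N be m×m real matrices with |m_ij| ≤ 1 for all entries of M and n_ij ∈ {1, −1} for all entries of N. If MZ = N for some signed half-permutation matrix Z, then every entry of M is 1 or −1, and moreover MQ = N for every integration Q of Z. -/
open SimpleGraph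

/-!
Every line `z` of a signed half-permutation matrix has `∑ₖ |zₖ| = 1`. If a row `x` with
`|xₖ| ≤ 1` satisfies `x ⬝ᵥ z = n` with `n = ±1`, then `n xₖ zₖ ≤ |zₖ|` for each `k` and the
two sides have the same sum, so `xₖ zₖ = n |zₖ|` termwise. This forces `|xₖ| = 1` wherever
`zₖ ≠ 0`, and since an integration `q` of `z` is a nonnegative rescaling of `z` entrywise
with `∑ₖ |qₖ| = 1`, it also gives `x ⬝ᵥ q = n ∑ₖ |qₖ| = n`.
-/

open Finset

section

variable {m : Type*}

lemma SignedPermLine.sum_abs_eq_one [Fintype m] {r : m → ℝ} (hr : SignedPermLine r) :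
    ∑ k, |r k| = 1 := by
  obtain ⟨j, hj, hzero⟩ := hr
  rw [sum_eq_single_of_mem j (mem_univ j) fun k _ hk => by rw [hzero k hk, abs_zero]]
  rcases hj with hj | hj <;> simp [hj]

lemma HalfLine.sum_abs_eq_one [Fintype m] {r : m → ℝ} (hr : HalfLine r) :
    ∑ k, |r k| = 1 := by
  rcases hr with hr | ⟨j, k, hjk, hj, hk, hzero⟩
  · exact hr.sum_abs_eq_one
  · rw [sum_eq_add_of_mem j k (mem_univ j) (mem_univ k) hjk
      fun l _ hl => by rw [hzero l hl.1 hl.2, abs_zero]]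
    rcases hj with hj | hj <;> rcases hk with hk | hk <;> norm_num [hj, hk]

lemma HalfLine.apply_cases {r : m → ℝ} (hr : HalfLine r) (k : m) :
    r k = 0 ∨ (r k = 1 ∨ r k = -1) ∨ (r k = 1/2 ∨ r k = -1/2) := by
  rcases hr with ⟨j, hj, hzero⟩ | ⟨j, l, -, hj, hl, hzero⟩
  · by_cases hkj : k = j
    · exact .inr (.inl (hkj ▸ hj))
    · exact .inl (hzero k hkj)
  · by_cases hkj : k = j
    · exact .inr (.inr (hkj ▸ hj))
    by_cases hkl : k = l
    · exact .inr (.inr (hkl ▸ hl))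
    exact .inl (hzero k hkj hkl)

lemma IsIntegration.exists_nonneg_mul {Q Z : Matrix m m ℝ} (hQ : IsIntegration Q Z)
    (hZ : IsSignedHalfPermMatrix Z) (i j : m) : ∃ c : ℝ, 0 ≤ c ∧ Q i j = c * Z i j := by
  obtain ⟨hunit, hhalf, hzero⟩ := hQ.2 i j
  rcases (hZ.1 i).apply_cases j with h0 | h1 | h2
  · exact ⟨0, le_rfl, by rw [hzero h0, zero_mul]⟩
  · exact ⟨1, zero_le_one, by rw [one_mul, hunit h1]⟩
  · rcases hhalf h2 with h | h
    · exact ⟨2, zero_le_two, h⟩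
    · exact ⟨0, le_rfl, by rw [h, zero_mul]⟩

section DotProduct

variable [Fintype m] {x z : m → ℝ} {n : ℝ}

lemma mul_eq_mul_abs_of_dotProduct_eq (hx : ∀ k, |x k| ≤ 1) (hz : ∑ k, |z k| = 1)
    (hn : |n| = 1) (h : x ⬝ᵥ z = n) (k : m) : x k * z k = n * |z k| := by
  have hnn : n * n = 1 := by rw [← abs_mul_abs_self, hn, one_mul]
  have hle : ∀ l ∈ univ, n * (x l * z l) ≤ |z l| := fun l _ =>
    calc n * (x l * z l) ≤ |n * (x l * z l)| := le_abs_self _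
      _ = |x l| * |z l| := by rw [abs_mul, hn, one_mul, abs_mul]
      _ ≤ |z l| := mul_le_of_le_one_left (abs_nonneg _) (hx l)
  have hsum : ∑ l, n * (x l * z l) = ∑ l, |z l| := by
    rw [← mul_sum, ← dotProduct, h, hnn, hz]
  have hk := (sum_eq_sum_iff_of_le hle).1 hsum k (mem_univ k)
  calc x k * z k = n * (n * (x k * z k)) := by rw [← mul_assoc, hnn, one_mul]
    _ = n * |z k| := by rw [hk]

lemma dotProduct_eq_of_mul_eq_mul_abs {q : m → ℝ} (hxz : ∀ k, x k * z k = n * |z k|)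
    (hq : ∀ k, ∃ c : ℝ, 0 ≤ c ∧ q k = c * z k) (hq1 : ∑ k, |q k| = 1) : x ⬝ᵥ q = n := by
  have hxq : ∀ k, x k * q k = n * |q k| := fun k => by
    obtain ⟨c, hc, hqk⟩ := hq k
    rw [hqk, abs_mul, abs_of_nonneg hc, mul_left_comm, hxz, mul_left_comm]
  rw [dotProduct, sum_congr rfl fun k _ => hxq k, ← mul_sum, hq1, mul_one]

end DotProduct

end

/-- if `MZ = N` with `|M| ≤ 1` entrywise, `N` entrywise `±1`, and `Z` a
signed half-permutation matrix, then `M` is entrywise `±1` and `MQ = N` for every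
integration `Q` of `Z`. -/
theorem halfPerm_rigidity {m : Type*} [Fintype m] (M N Z : Matrix m m ℝ)
    (hM : ∀ i j, |M i j| ≤ 1) (hN : ∀ i j, N i j = 1 ∨ N i j = -1)
    (hZ : IsSignedHalfPermMatrix Z) (h : M * Z = N) :
    (∀ i j, M i j = 1 ∨ M i j = -1) ∧
      ∀ Q : Matrix m m ℝ, IsIntegration Q Z → M * Q = N := by
  have hNabs : ∀ i j, |N i j| = 1 := fun i j => by rcases hN i j with h | h <;> simp [h]
  have hterm : ∀ i j k, M i k * Z k j = N i j * |Z k j| := fun i j =>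
    mul_eq_mul_abs_of_dotProduct_eq (hM i) (hZ.2 j).sum_abs_eq_one (hNabs i j)
      (by rw [← Matrix.mul_apply', h])
  refine ⟨fun i k => ?_, fun Q hQ => ?_⟩
  · obtain ⟨j, -, hj⟩ := exists_ne_zero_of_sum_ne_zero
      (((hZ.1 k).sum_abs_eq_one).trans_ne one_ne_zero)
    have habs : |M i k| = 1 := by
      simpa [abs_mul, hNabs, hj] using congrArg abs (hterm i j k)
    exact (abs_eq zero_le_one).1 habs
  · ext i j
    exact dotProduct_eq_of_mul_eq_mul_abs (hterm i j) (fun k => hQ.exists_nonneg_mul hZ k j)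
      (hQ.1.2 j).sum_abs_eq_one
end

section
/- If two n×n Seidel matrices A and B satisfy à = P B̃ P⁻¹ for some 2n×2n permutation matrix P, where M̃ := [[M, I−M],[I−M, M]], then there exists an n×n signed permutation matrix Q with A = Q B Q⁻¹. -/
open SimpleGraph

/-!
Index `M̃` by two sheets `inl i`, `inr i` over each `i : Fin n`. On any two indices that coincide
or lie over different points, `M̃` agrees with `M` on the base points up to the product of the
sheet signs `±1`. Conjugating by the permutation matrix of `σ` gives `Ã x y = B̃ (σ x) (σ y)`.
By Hall's theorem there is a point `z i` over each `i` such that the bases `w i` of the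
`σ (z i)` are pairwise distinct. Then `A i j = ε i * B (w i) (w j) * ε j`, where `ε i` is the
product of the sheet signs of `z i` and `σ (z i)`; that is, `A = Q B Q⁻¹` for `Q = diag ε * P_w`.
-/

open Matrix

section SumSelf

variable {α : Type*}

def sumBase : α ⊕ α → α := Sum.elim id id

def sumSign : α ⊕ α → ℝ := Sum.elim (fun _ => 1) (fun _ => -1)

lemma sumSign_mul_self (x : α ⊕ α) : sumSign x * sumSign x = 1 := by
  cases x <;> simp [sumSign]

lemma sumSign_mul_sumSign_eq_one_or_neg_one {β : Type*} (x : α ⊕ α) (y : β ⊕ β) :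
    sumSign x * sumSign y = 1 ∨ sumSign x * sumSign y = -1 := by
  cases x <;> cases y <;> simp [sumSign]

lemma Finset.mem_disjSum_self_iff {s : Finset α} {x : α ⊕ α} :
    x ∈ s.disjSum s ↔ sumBase x ∈ s := by
  cases x <;> simp [sumBase]

variable [Fintype α] [DecidableEq α]

theorem exists_section_perm_compatible (σ : Equiv.Perm (α ⊕ α)) :
    ∃ (w : Equiv.Perm α) (z : α → α ⊕ α), ∀ i, sumBase (z i) = i ∧ sumBase (σ (z i)) = w i := by
  let t : α → Finset α := fun i => {sumBase (σ (.inl i)), sumBase (σ (.inr i))}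
  have hall : ∀ s : Finset α, s.card ≤ (s.biUnion t).card := by
    intro s
    -- `σ` maps the `2 * #s` points over `s` into the `2 * #J` points over `J := s.biUnion t`.
    have hmaps : (s.disjSum s).map σ.toEmbedding ⊆ (s.biUnion t).disjSum (s.biUnion t) := by
      intro y hy
      obtain ⟨x, hx, rfl⟩ := Finset.mem_map.mp hy
      rw [Finset.mem_disjSum_self_iff] at hx ⊢
      refine Finset.mem_biUnion.mpr ⟨sumBase x, hx, ?_⟩
      cases x <;> simp [t, sumBase]
    have := Finset.card_le_card hmaps
    simp only [Finset.card_map, Finset.card_disjSum] at this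
    omega
  obtain ⟨f, hf_inj, hf_mem⟩ := (Finset.all_card_le_biUnion_card_iff_exists_injective t).mp hall
  have hlift : ∀ i, ∃ x : α ⊕ α, sumBase x = i ∧ sumBase (σ x) = f i := by
    intro i
    rcases Finset.mem_insert.mp (hf_mem i) with h | h
    · exact ⟨.inl i, rfl, h.symm⟩
    · exact ⟨.inr i, rfl, (Finset.mem_singleton.mp h).symm⟩
  choose z hz using hlift
  exact ⟨Equiv.ofBijective f (Finite.injective_iff_bijective.mp hf_inj), z, hz⟩

end SumSelf

section PermMatrix

variable {m R : Type*} [Fintype m] [DecidableEq m] [CommRing R]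

lemma Matrix.inv_permMatrix (σ : Equiv.Perm m) : (σ.permMatrix R)⁻¹ = σ⁻¹.permMatrix R :=
  inv_eq_right_inv (by rw [← permMatrix_mul, inv_mul_cancel, permMatrix_one])

lemma Matrix.permMatrix_mul_mul_inv (σ : Equiv.Perm m) (M : Matrix m m R) :
    σ.permMatrix R * M * (σ.permMatrix R)⁻¹ = M.submatrix σ σ := by
  rw [inv_permMatrix, PEquiv.toMatrix_toPEquiv_mul, PEquiv.mul_toMatrix_toPEquiv]
  rfl

lemma Matrix.diagonal_mul_permMatrix_conj {ε : m → R} (hε : ∀ i, ε i * ε i = 1)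
    (w : Equiv.Perm m) (M : Matrix m m R) :
    diagonal ε * w.permMatrix R * M * (diagonal ε * w.permMatrix R)⁻¹
      = of fun i j => ε i * M (w i) (w j) * ε j := by
  have hD : (diagonal ε)⁻¹ = diagonal ε :=
    inv_eq_left_inv (by rw [diagonal_mul_diagonal, ← diagonal_one]; exact congrArg _ (funext hε))
  rw [mul_inv_rev, hD, ← Matrix.mul_assoc, Matrix.mul_assoc _ (w.permMatrix R),
    Matrix.mul_assoc _ _ (w.permMatrix R)⁻¹, permMatrix_mul_mul_inv]
  ext i j
  simp [diagonal_mul, mul_diagonal]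

lemma isSignedPermMatrix_diagonal_mul_permMatrix {ε : m → ℝ} (hε : ∀ i, ε i = 1 ∨ ε i = -1)
    (w : Equiv.Perm m) :
    IsSignedPermMatrix (diagonal ε * w.permMatrix ℝ) := by
  have happly : ∀ i k, (diagonal ε * w.permMatrix ℝ) i k = if w i = k then ε i else 0 := by
    intro i k
    simp [diagonal_mul]
  refine ⟨fun i => ⟨w i, ?_, fun k hk => ?_⟩, fun k => ⟨w.symm k, ?_, fun i hi => ?_⟩⟩
  · simpa [happly] using hε i
  · simp [happly, Ne.symm hk]
  · simpa [happly] using hε (w.symm k)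
  · simp [happly, ← Equiv.eq_symm_apply, hi]

end PermMatrix

lemma tildeMat_apply {n : ℕ} (M : Matrix (Fin n) (Fin n) ℝ) {x y : Fin n ⊕ Fin n}
    (hxy : sumBase x = sumBase y → x = y) :
    tildeMat M x y = sumSign x * sumSign y * M (sumBase x) (sumBase y) := by
  rcases x with i | i <;> rcases y with j | j <;>
    simp_all [tildeMat, sumSign, sumBase, Matrix.sub_apply, one_apply]

lemma apply_eq_of_tildeMat_eq_submatrix {n : ℕ} {A B : Matrix (Fin n) (Fin n) ℝ}
    {σ : Equiv.Perm (Fin n ⊕ Fin n)} (h : tildeMat A = (tildeMat B).submatrix σ σ)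
    {w : Equiv.Perm (Fin n)} {z : Fin n → Fin n ⊕ Fin n}
    (hz : ∀ i, sumBase (z i) = i ∧ sumBase (σ (z i)) = w i) (i j : Fin n) :
    A i j = sumSign (z i) * sumSign (σ (z i)) * B (w i) (w j) *
      (sumSign (z j) * sumSign (σ (z j))) := by
  have hsep : sumBase (z i) = sumBase (z j) → z i = z j := by
    rw [(hz i).1, (hz j).1]
    rintro rfl
    rfl
  have hsep' : sumBase (σ (z i)) = sumBase (σ (z j)) → σ (z i) = σ (z j) := by
    rw [(hz i).2, (hz j).2]
    intro hw
    rw [hsep (by rw [(hz i).1, (hz j).1]; exact w.injective hw)]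
  have hentry := congrFun (congrFun h (z i)) (z j)
  rw [submatrix_apply, tildeMat_apply A hsep, tildeMat_apply B hsep', (hz i).1, (hz j).1,
    (hz i).2, (hz j).2] at hentry
  linear_combination (sumSign (z i) * sumSign (z j)) * hentry - A i j * sumSign_mul_self (z i)
    - A i j * sumSign (z i) * sumSign (z i) * sumSign_mul_self (z j)

theorem tilde_conj_signed_general {n : ℕ} (A B : Matrix (Fin n) (Fin n) ℝ)
    (P : Matrix (Fin n ⊕ Fin n) (Fin n ⊕ Fin n) ℝ) (hP : IsPermMatrix P)
    (h : tildeMat A = P * tildeMat B * P⁻¹) :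
    ∃ Q : Matrix (Fin n) (Fin n) ℝ, IsSignedPermMatrix Q ∧ A = Q * B * Q⁻¹ := by
  obtain ⟨σ, rfl⟩ := hP
  rw [permMatrix_mul_mul_inv] at h
  obtain ⟨w, z, hz⟩ := exists_section_perm_compatible σ
  let ε i := sumSign (z i) * sumSign (σ (z i))
  have hε : ∀ i, ε i = 1 ∨ ε i = -1 := fun i => sumSign_mul_sumSign_eq_one_or_neg_one _ _
  have hε_sq : ∀ i, ε i * ε i = 1 := fun i => by rcases hε i with h | h <;> simp [h]
  refine ⟨diagonal ε * w.permMatrix ℝ, isSignedPermMatrix_diagonal_mul_permMatrix hε w, ?_⟩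
  rw [diagonal_mul_permMatrix_conj hε_sq]
  ext i j
  exact apply_eq_of_tildeMat_eq_submatrix h hz i j

/-- if `Ã = P B̃ P⁻¹` for a permutation matrix `P`, then `A = Q B Q⁻¹`
for some signed permutation matrix `Q`. -/
theorem tilde_conj_signed {n : ℕ} (A B : Matrix (Fin n) (Fin n) ℝ)
    (hA : IsSeidel A) (hB : IsSeidel B)
    (P : Matrix (Fin n ⊕ Fin n) (Fin n ⊕ Fin n) ℝ) (hP : IsPermMatrix P)
    (h : tildeMat A = P * tildeMat B * P⁻¹) :
    ∃ Q : Matrix (Fin n) (Fin n) ℝ, IsSignedPermMatrix Q ∧ A = Q * B * Q⁻¹ :=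
  tilde_conj_signed_general A B P hP h
end

section
/- If the doubled graphs G̃ and G̃' of two graphs G and G' on n vertices are isomorphic, then G and G' are switching equivalent. -/
open SimpleGraph

/-!
An isomorphism `φ : G̃ ≃g G̃'` conjugates the involution `i ↔ i'` of `G̃'` into a second
fixed-point-free involution `m` of `G̃`. Together with `i ↔ i'` it generates a dihedral action
whose orbits are even cycles alternating between the two involutions, so some set `B` contains
exactly one point of every pair `{x, x'}` and of every pair `{x, m x}`. A set meeting every pair
`{i, i'}` once induces in `G̃` the switching of `G` at the indices it takes from the primed copy,
and `φ` carries `B` onto such a set of `G̃'`. So a switching of `G` is isomorphic to a switching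
of `G'`, and switching is undone by switching again.
-/

section Transversal

variable {X : Type*}

-- For a fixed-point-free involution `f`: `B` contains exactly one point of each pair `{x, f x}`.
def IsTransversal (f : X → X) (B : Set X) : Prop :=
  ∀ x, f x ∈ B ↔ x ∉ B

theorem exists_isTransversal {f : X → X} (hf : Function.Involutive f) (hfix : ∀ x, f x ≠ x) :
    ∃ B : Set X, IsTransversal f B := by
  let := IsWellOrder.linearOrder (WellOrderingRel (α := X))
  refine ⟨{x | x < f x}, fun x => ?_⟩
  simp only [Set.mem_ofPred_eq, hf x, not_lt]
  exact ⟨le_of_lt, fun h => lt_of_le_of_ne h (hfix x)⟩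

-- `u` permutes the cycles of `σ` without fixing any of them; take a transversal of that action.
theorem exists_isTransversal_of_conj_eq_inv {σ u : Equiv.Perm X} (hu : Function.Involutive u)
    (hconj : u * σ * u⁻¹ = σ⁻¹) (hsep : ∀ x, ¬ σ.SameCycle x (u x)) :
    ∃ B : Set X, IsTransversal u B ∧ ∀ x, σ x ∈ B ↔ x ∈ B := by
  have hmap : ∀ x y, σ.SameCycle x y → σ.SameCycle (u x) (u y) := fun x y h => by
    rw [← Equiv.Perm.sameCycle_inv, ← hconj, Equiv.Perm.sameCycle_conj]
    simpa using h
  let cycles := Equiv.Perm.SameCycle.setoid σ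
  let ū : Quotient cycles → Quotient cycles := Quotient.map u hmap
  have hū : Function.Involutive ū := by
    rintro ⟨x⟩
    exact congrArg _ (hu x)
  obtain ⟨C, hC⟩ := exists_isTransversal hū (by
    rintro ⟨x⟩ h
    exact hsep x (Quotient.exact h).symm)
  refine ⟨{x | ⟦x⟧ ∈ C}, fun x => hC ⟦x⟧, fun x => ?_⟩
  have : (⟦σ x⟧ : Quotient cycles) = ⟦x⟧ :=
    Quotient.sound (Equiv.Perm.sameCycle_apply_left.2 (Equiv.Perm.SameCycle.refl σ x))
  simp only [Set.mem_ofPred_eq, this]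

theorem mul_mul_inv_eq_inv_of_involutive {u v : Equiv.Perm X} (hu : Function.Involutive u)
    (hv : Function.Involutive v) : u * (u * v) * u⁻¹ = (u * v)⁻¹ := by
  have huu : u * u = 1 := Equiv.ext hu
  have hvv : v * v = 1 := Equiv.ext hv
  rw [mul_inv_rev, inv_eq_of_mul_eq_one_right huu, inv_eq_of_mul_eq_one_right hvv, ← mul_assoc,
    huu, one_mul]

theorem not_sameCycle_mul {u v : Equiv.Perm X} (hu : Function.Involutive u)
    (hv : Function.Involutive v) (hu' : ∀ x, u x ≠ x) (hv' : ∀ x, v x ≠ x) (x : X) :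
    ¬ (u * v).SameCycle x (u x) := by
  set σ := u * v
  have hconj (k : ℤ) (y : X) : u ((σ ^ k) y) = (σ ^ (-k)) (u y) := by
    have : u * σ ^ k * u⁻¹ = σ ^ (-k) := by
      rw [← conj_zpow, mul_mul_inv_eq_inv_of_involutive hu hv, inv_zpow, zpow_neg]
    rw [← this]
    simp
  -- If `σ ^ k x = u x`, then `σ ^ s x` is fixed by `u` (for `k = 2s`) or by `v` (for `k = 2s + 1`).
  rintro ⟨k, hk⟩
  obtain ⟨s, rfl | rfl⟩ := Int.even_or_odd' k
  · refine hu' ((σ ^ s) x) ?_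
    rw [hconj, ← hk, ← Equiv.Perm.mul_apply, ← zpow_add]
    congr 2
    ring
  · refine hv' ((σ ^ s) x) (u.injective ?_)
    rw [hconj, ← hk, ← Equiv.Perm.mul_apply (σ ^ (-s)), ← zpow_add,
      show -s + (2 * s + 1) = 1 + s by ring, zpow_one_add, Equiv.Perm.mul_apply]
    rfl

theorem exists_isTransversal_of_involutive {u v : Equiv.Perm X} (hu : Function.Involutive u)
    (hv : Function.Involutive v) (hu' : ∀ x, u x ≠ x) (hv' : ∀ x, v x ≠ x) :
    ∃ B : Set X, IsTransversal u B ∧ IsTransversal v B := by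
  obtain ⟨B, hBu, hBσ⟩ := exists_isTransversal_of_conj_eq_inv hu
    (mul_mul_inv_eq_inv_of_involutive hu hv) (not_sameCycle_mul hu hv hu' hv')
  refine ⟨B, hBu, fun x => ?_⟩
  have : v x = u ((u * v) x) := (hu (v x)).symm
  rw [this, hBu, hBσ]

end Transversal

section Switching

variable {V W : Type*}

def switchSet (G : SimpleGraph V) (s : Set V) : SimpleGraph V where
  Adj x y := x ≠ y ∧ (G.Adj x y ↔ (x ∈ s ↔ y ∈ s))
  symm := ⟨fun x y h => ⟨h.1.symm, by rw [G.adj_comm, h.2]; tauto⟩⟩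
  loopless := ⟨fun x h => h.1 rfl⟩

theorem switchSet_adj (G : SimpleGraph V) (s : Set V) (x y : V) :
    (switchSet G s).Adj x y ↔ x ≠ y ∧ (G.Adj x y ↔ (x ∈ s ↔ y ∈ s)) := Iff.rfl

theorem switchSet_empty (G : SimpleGraph V) : switchSet G ∅ = G := by
  ext x y
  simp only [switchSet_adj, Set.mem_empty_iff_false, iff_self, iff_true]
  exact ⟨And.right, fun h => ⟨h.ne, h⟩⟩

theorem switchSet_switchSet (G : SimpleGraph V) (s t : Set V) :
    switchSet (switchSet G s) t = switchSet G (symmDiff s t) := by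
  ext x y
  simp only [switchSet_adj, Set.mem_symmDiff]
  tauto

theorem switch_eq_switchSet (G : SimpleGraph V) (v : V) : switch G v = switchSet G {v} := by
  ext x y
  simp only [switch, Xor', fromRel_adj, switchSet_adj, Set.mem_singleton_iff, G.adj_comm y x,
    xor_iff_not_iff]
  by_cases hx : x = v <;> by_cases hy : y = v <;> simp_all

theorem switchEquiv_switchSet [Finite V] (G : SimpleGraph V) (s : Set V) :
    SwitchEquiv G (switchSet G s) := by
  induction s, s.toFinite using Set.Finite.induction_on with
  | empty => rw [switchSet_empty]; exact .refl
  | @insert a s ha _ ih =>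
    have : insert a s = symmDiff s {a} := by
      rw [Disjoint.symmDiff_eq_sup (Set.disjoint_singleton_right.2 ha), Set.insert_eq]
      exact Set.union_comm _ _
    rw [this, ← switchSet_switchSet, ← switch_eq_switchSet]
    exact ih.tail ⟨a, rfl⟩

def SimpleGraph.Iso.switchSet {H : SimpleGraph V} {K : SimpleGraph W} (e : H ≃g K) (s : Set W) :
    switchSet H (e ⁻¹' s) ≃g switchSet K s where
  toEquiv := e.toEquiv
  map_rel_iff' := by
    intro x y
    simp [switchSet_adj, e.map_adj_iff]

theorem switchEquivIso_of_iso_switchSet [Finite V] {G G' : SimpleGraph V} {s s' : Set V}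
    (e : switchSet G s ≃g switchSet G' s') : SwitchEquivIso G G' := by
  refine ⟨switchSet G (symmDiff s (e ⁻¹' s')), switchEquiv_switchSet G _, ⟨?_⟩⟩
  rw [← switchSet_switchSet]
  convert e.switchSet s'
  rw [switchSet_switchSet, symmDiff_self, Set.bot_eq_empty, switchSet_empty]

end Switching

section Double

variable {V : Type*}

open Classical in
noncomputable def doubleSection (s : Set V) (i : V) : V ⊕ V :=
  if i ∈ s then .inr i else .inl i

theorem double_adj_doubleSection (G : SimpleGraph V) (s : Set V) (i j : V) :
    (double G).Adj (doubleSection s i) (doubleSection s j) ↔ (switchSet G s).Adj i j := by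
  rcases eq_or_ne i j with rfl | hij
  · simp
  unfold doubleSection
  by_cases hi : i ∈ s <;> by_cases hj : j ∈ s <;>
    simp [hi, hj, hij, hij.symm, double, switchSet_adj, G.adj_comm j i]

theorem doubleSection_mem {B : Set (V ⊕ V)} (hB : IsTransversal Sum.swap B) (i : V) :
    doubleSection {i | .inr i ∈ B} i ∈ B := by
  unfold doubleSection
  split_ifs with h
  · exact h
  · simpa using (hB (.inl i)).not.1 h

theorem doubleSection_eq_of_mem {B : Set (V ⊕ V)} (hB : IsTransversal Sum.swap B)
    {x : V ⊕ V} (hx : x ∈ B) : doubleSection {i | .inr i ∈ B} (x.elim id id) = x := by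
  unfold doubleSection
  rcases x with i | i
  · have : Sum.inr i ∉ B := fun h => (hB (.inl i)).1 h hx
    simp [this]
  · simp [hx]

theorem elim_doubleSection (s : Set V) (i : V) : (doubleSection s i).elim id id = i := by
  unfold doubleSection
  split_ifs <;> rfl

theorem doubleSection_injective (s : Set V) : Function.Injective (doubleSection s) :=
  Function.LeftInverse.injective (elim_doubleSection s)

theorem exists_iso_switchSet_of_iso_double [Finite V] {G G' : SimpleGraph V}
    (φ : double G ≃g double G') :
    ∃ s s' : Set V, Nonempty (switchSet G s ≃g switchSet G' s') := by
  let u : Equiv.Perm (V ⊕ V) := Equiv.sumComm V V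
  have hu : Function.Involutive u := Sum.swap_swap
  have hu' : ∀ x, u x ≠ x := by rintro (i | i) <;> simp [u]
  let m : Equiv.Perm (V ⊕ V) := φ.toEquiv.trans (u.trans φ.symm.toEquiv)
  have hm : Function.Involutive m := fun x => by simp [m, hu _]
  have hm' : ∀ x, m x ≠ x := fun x h => hu' (φ x) (by simpa [m] using congrArg φ h)
  obtain ⟨B, hBu, hBm⟩ := exists_isTransversal_of_involutive hu hm hu' hm'
  let B' : Set (V ⊕ V) := φ.symm ⁻¹' B
  have hB'u : IsTransversal u B' := fun y => by
    simpa [m, B'] using hBm (φ.symm y)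
  let s : Set V := {i | .inr i ∈ B}
  let s' : Set V := {i | .inr i ∈ B'}
  let π : V → V := fun i => (φ (doubleSection s i)).elim id id
  have hπ (i : V) : doubleSection s' (π i) = φ (doubleSection s i) :=
    doubleSection_eq_of_mem hB'u (by simpa [B'] using doubleSection_mem hBu i)
  have hπinj : Function.Injective π := fun i j h =>
    doubleSection_injective s (φ.injective (by rw [← hπ, ← hπ, h]))
  refine ⟨s, s', ⟨Equiv.ofBijective π (Finite.injective_iff_bijective.1 hπinj), ?_⟩⟩
  intro i j
  rw [Equiv.ofBijective_apply, Equiv.ofBijective_apply, ← double_adj_doubleSection, hπ, hπ,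
    φ.map_adj_iff, double_adj_doubleSection]

end Double

/-- graphs with isomorphic doubles are switching equivalent. -/
theorem double_iso_switchEquiv {n : ℕ} (G G' : SimpleGraph (Fin n))
    (h : Nonempty (double G ≃g double G')) : SwitchEquivIso G G' := by
  obtain ⟨φ⟩ := h
  obtain ⟨s, s', ⟨e⟩⟩ := exists_iso_switchSet_of_iso_double φ
  exact switchEquivIso_of_iso_switchSet e
end
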